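/- Let p > 0, a ∈ ℝ and λ ≥ −a²/2, and set α = √(a² + 2λ) − a and β = 1/2 + √(a² + 2λ)/p. Then: (a) for every ξ ∈ ℝ, the function P(x,z) = e^{αz}·((ξ² + 1)/((ξ − p x)² + e^{2pz}))^{β} is strictly positive, C², and satisfies Δ^{H(p)}_a P = λ·P on ℝ²; (b) the function (x,z) ↦ e^{αz} is strictly positive, C², and satisfies Δ^{H(p)}_a e^{αz} = λ·e^{αz} on ℝ². -/

import Mathlib

/-!
Write the kernel as `(ξ² + 1)^β · e^{αz} D^{-β}` with `D = (ξ - p x)² + e^{2pz}`. Both second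
partial derivatives of `e^{αz} D^γ` are `e^{αz} D^{γ-2}` times a quadratic form in `(ξ - p x)²` and
`e^{2pz}`, so the eigenvalue equation reduces to matching three coefficients against `λ D²`. For
`α = s - a` and `γ = -(1/2 + s/p)` all three match with `λ = (s² - a²)/2`, which is the given `λ`
when `s = √(a² + 2λ)`; the first coefficient alone is the equation for `e^{αz}`.
-/

open Real

/-- The hyperbolic Laplacian with drift `b` on the logarithmic model `H(r) ≡ ℝ²`:
`Δ^{H(r)}_b g = (1/2)(e^{2rz} g_xx + g_zz) + b g_z`. -/
noncomputable def hypLap (r b : ℝ) (g : ℝ × ℝ → ℝ) (w : ℝ × ℝ) : ℝ :=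
  (1/2) * (Real.exp (2*r*w.2) * iteratedDeriv 2 (fun t => g (t, w.2)) w.1
    + iteratedDeriv 2 (fun t => g (w.1, t)) w.2)
  + b * deriv (fun t => g (w.1, t)) w.2

/-- The modified Poisson kernel `P_{p,a,λ}((x,z),ξ)` for `ξ ∈ ℝ`, with
`α = √(a²+2λ) − a` and `β = 1/2 + √(a²+2λ)/p`. -/
noncomputable def hypPoissonKernel (p a lam ξ : ℝ) (w : ℝ × ℝ) : ℝ :=
  Real.exp ((Real.sqrt (a^2 + 2*lam) - a) * w.2) *
    ((ξ^2 + 1) / ((ξ - p * w.1)^2 + Real.exp (2*p*w.2)))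
      ^ ((1:ℝ)/2 + Real.sqrt (a^2 + 2*lam) / p)

lemma iteratedDeriv_two_eq_of_hasDerivAt {𝕜 F : Type*} [NontriviallyNormedField 𝕜]
    [NormedAddCommGroup F] [NormedSpace 𝕜 F] {f f' : 𝕜 → F} {f'' : F} {x : 𝕜}
    (hf : ∀ y, HasDerivAt f (f' y) y) (hf' : HasDerivAt f' f'' x) :
    iteratedDeriv 2 f x = f'' := by
  rw [iteratedDeriv_succ, iteratedDeriv_one, funext fun y => (hf y).deriv, hf'.deriv]

lemma rpow_sub_one_eq_rpow_sub_two_mul {x : ℝ} (hx : x ≠ 0) (y : ℝ) :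
    x ^ (y - 1) = x ^ (y - 2) * x := by
  rw [← rpow_add_one hx]; congr 1; ring

lemma rpow_eq_rpow_sub_two_mul_sq {x : ℝ} (hx : 0 < x) (y : ℝ) :
    x ^ y = x ^ (y - 2) * x ^ 2 := by
  rw [← rpow_two, ← rpow_add hx, sub_add_cancel]

lemma hasDerivAt_exp_const_mul (α y : ℝ) :
    HasDerivAt (fun t => exp (α * t)) (α * exp (α * y)) y := by
  simpa [mul_comm] using ((hasDerivAt_id' y).const_mul α).exp

lemma iteratedDeriv_two_rpow_sq_add {E : ℝ} (hE : 0 < E) (ξ p γ x : ℝ) :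
    iteratedDeriv 2 (fun t => ((ξ - p * t) ^ 2 + E) ^ γ) x =
      2 * p ^ 2 * γ * ((ξ - p * x) ^ 2 + E) ^ (γ - 2) * ((2 * γ - 1) * (ξ - p * x) ^ 2 + E) := by
  have hpos : ∀ y, 0 < (ξ - p * y) ^ 2 + E := fun y => by positivity
  have hlin : ∀ y, HasDerivAt (fun t => ξ - p * t) (-p) y := fun y => by
    simpa using ((hasDerivAt_id' y).const_mul p).const_sub ξ
  have hbase : ∀ y, HasDerivAt (fun t => (ξ - p * t) ^ 2 + E) (-2 * p * (ξ - p * y)) y :=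
    fun y => (((hlin y).fun_pow 2).add_const E).congr_deriv (by push_cast; ring)
  have hpow : ∀ δ y, HasDerivAt (fun t => ((ξ - p * t) ^ 2 + E) ^ δ)
      (-2 * p * (ξ - p * y) * δ * ((ξ - p * y) ^ 2 + E) ^ (δ - 1)) y :=
    fun δ y => (hbase y).rpow_const (Or.inl (hpos y).ne')
  have hderiv := (((hlin x).const_mul (-2 * p)).mul_const γ).mul (hpow (γ - 1) x)
  rw [iteratedDeriv_two_eq_of_hasDerivAt (hpow γ) hderiv, show γ - 1 - 1 = γ - 2 by ring,
    rpow_sub_one_eq_rpow_sub_two_mul (hpos x).ne']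
  ring

lemma hasDerivAt_exp_mul_rpow_add_exp {B : ℝ} (hB : 0 ≤ B) (α p γ t : ℝ) :
    HasDerivAt (fun t => exp (α * t) * (B + exp (2 * p * t)) ^ γ)
      (exp (α * t) * (B + exp (2 * p * t)) ^ (γ - 1) *
        (α * (B + exp (2 * p * t)) + 2 * p * γ * exp (2 * p * t))) t := by
  have hT : 0 < B + exp (2 * p * t) := by positivity
  have hγ : (B + exp (2 * p * t)) ^ γ =
      (B + exp (2 * p * t)) ^ (γ - 1) * (B + exp (2 * p * t)) := by
    rw [← rpow_add_one hT.ne', sub_add_cancel]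
  refine ((hasDerivAt_exp_const_mul α t).fun_mul
    (((hasDerivAt_exp_const_mul (2 * p) t).const_add B).rpow_const (Or.inl hT.ne'))).congr_deriv ?_
  rw [hγ]
  ring

lemma iteratedDeriv_two_exp_mul_rpow_add_exp {B : ℝ} (hB : 0 ≤ B) (α p γ t : ℝ) :
    iteratedDeriv 2 (fun t => exp (α * t) * (B + exp (2 * p * t)) ^ γ) t =
      exp (α * t) * (B + exp (2 * p * t)) ^ (γ - 2) *
        ((α * (B + exp (2 * p * t)) + 2 * p * γ * exp (2 * p * t)) ^ 2
          + 4 * p ^ 2 * γ * B * exp (2 * p * t)) := by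
  have hT : 0 < B + exp (2 * p * t) := by positivity
  have hE := hasDerivAt_exp_const_mul (2 * p) t
  have h := ((hasDerivAt_exp_const_mul α t).fun_mul
    ((hE.const_add B).rpow_const (p := γ - 1) (Or.inl hT.ne'))).fun_mul
    (((hE.const_add B).const_mul α).fun_add (hE.const_mul (2 * p * γ)))
  rw [iteratedDeriv_two_eq_of_hasDerivAt (hasDerivAt_exp_mul_rpow_add_exp hB α p γ) h,
    show γ - 1 - 1 = γ - 2 by ring, rpow_sub_one_eq_rpow_sub_two_mul hT.ne']
  ring

lemma hypLap_const_mul (r b c : ℝ) (g : ℝ × ℝ → ℝ) (w : ℝ × ℝ) :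
    hypLap r b (fun u => c * g u) w = c * hypLap r b g w := by
  simp only [hypLap, iteratedDeriv_const_mul_field, deriv_const_mul_field']
  ring

lemma hypLap_exp_mul_snd (r b c : ℝ) (w : ℝ × ℝ) :
    hypLap r b (fun u => exp (c * u.2)) w = (c ^ 2 / 2 + b * c) * exp (c * w.2) := by
  have h2 := iteratedDeriv_two_eq_of_hasDerivAt (hasDerivAt_exp_const_mul c)
    ((hasDerivAt_exp_const_mul c w.2).const_mul c)
  simp only [hypLap, iteratedDeriv_const, two_ne_zero, if_false, h2,
    (hasDerivAt_exp_const_mul c w.2).deriv]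
  ring

lemma hypLap_exp_mul_rpow_sq_add_exp (p a s ξ : ℝ) (hp : p ≠ 0) (w : ℝ × ℝ) :
    hypLap p a (fun u => exp ((s - a) * u.2) *
        ((ξ - p * u.1) ^ 2 + exp (2 * p * u.2)) ^ (-(1 / 2 + s / p))) w =
      (s ^ 2 - a ^ 2) / 2 * (exp ((s - a) * w.2) *
        ((ξ - p * w.1) ^ 2 + exp (2 * p * w.2)) ^ (-(1 / 2 + s / p))) := by
  obtain ⟨x, z⟩ := w
  set γ := -(1 / 2 + s / p) with hγ
  have hD : 0 < (ξ - p * x) ^ 2 + exp (2 * p * z) := by positivity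
  simp only [hypLap]
  rw [iteratedDeriv_const_mul_field, iteratedDeriv_two_rpow_sq_add (exp_pos _),
    iteratedDeriv_two_exp_mul_rpow_add_exp (sq_nonneg _),
    (hasDerivAt_exp_mul_rpow_add_exp (sq_nonneg _) _ _ _ _).deriv,
    rpow_sub_one_eq_rpow_sub_two_mul hD.ne', rpow_eq_rpow_sub_two_mul_sq hD γ, hγ]
  field_simp
  ring

lemma hypPoissonKernel_eq_const_mul (p a lam ξ : ℝ) :
    hypPoissonKernel p a lam ξ = fun w => (ξ ^ 2 + 1) ^ (1 / 2 + √(a ^ 2 + 2 * lam) / p) *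
      (exp ((√(a ^ 2 + 2 * lam) - a) * w.2) *
        ((ξ - p * w.1) ^ 2 + exp (2 * p * w.2)) ^ (-(1 / 2 + √(a ^ 2 + 2 * lam) / p))) := by
  funext w
  have hD : 0 < (ξ - p * w.1) ^ 2 + exp (2 * p * w.2) := by positivity
  rw [hypPoissonKernel, div_rpow (by positivity) hD.le, rpow_neg hD.le]
  ring

lemma hypPoissonKernel_pos (p a lam ξ : ℝ) (w : ℝ × ℝ) : 0 < hypPoissonKernel p a lam ξ w := by
  unfold hypPoissonKernel
  positivity

lemma contDiff_hypPoissonKernel (p a lam ξ : ℝ) {n : WithTop ℕ∞} :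
    ContDiff ℝ n (hypPoissonKernel p a lam ξ) := by
  rw [hypPoissonKernel_eq_const_mul]
  refine contDiff_const.mul (.mul (by fun_prop) (ContDiff.rpow_const_of_ne (by fun_prop) ?_))
  intro w
  positivity

theorem poisson_kernels_are_eigenfunctions (p a lam : ℝ) (hp : 0 < p)
    (hlam : -a^2/2 ≤ lam) :
    (∀ ξ : ℝ,
      (∀ w : ℝ × ℝ, 0 < hypPoissonKernel p a lam ξ w) ∧
      ContDiff ℝ 2 (hypPoissonKernel p a lam ξ) ∧
      (∀ w : ℝ × ℝ, hypLap p a (hypPoissonKernel p a lam ξ) w = lam * hypPoissonKernel p a lam ξ w))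
    ∧
    ((∀ w : ℝ × ℝ, 0 < Real.exp ((Real.sqrt (a^2 + 2*lam) - a) * w.2)) ∧
      ContDiff ℝ 2 (fun w : ℝ × ℝ => Real.exp ((Real.sqrt (a^2 + 2*lam) - a) * w.2)) ∧
      (∀ w : ℝ × ℝ,
        hypLap p a (fun u : ℝ × ℝ => Real.exp ((Real.sqrt (a^2 + 2*lam) - a) * u.2)) w
          = lam * Real.exp ((Real.sqrt (a^2 + 2*lam) - a) * w.2))) := by
  have hs : (√(a ^ 2 + 2 * lam) ^ 2 - a ^ 2) / 2 = lam := by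
    rw [sq_sqrt (by linarith)]; ring
  refine ⟨fun ξ => ⟨hypPoissonKernel_pos p a lam ξ, contDiff_hypPoissonKernel p a lam ξ,
    fun w => ?_⟩, fun w => exp_pos _, by fun_prop, fun w => ?_⟩
  · rw [hypPoissonKernel_eq_const_mul, hypLap_const_mul,
      hypLap_exp_mul_rpow_sq_add_exp p a _ ξ hp.ne', hs]
    ring
  · rw [hypLap_exp_mul_snd]
    congr 1
    linear_combination hs
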